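/- If T is a tree on n vertices with radius r and center C(T) = {p} a single vertex, then ε(T) = d_T(p) + n·r, where d_T(p) is the total distance of p. -/

import Mathlib

open Finset

/-- The Wiener index: sum of distances over unordered pairs of vertices. -/
noncomputable def wiener {V : Type*} [Fintype V] (G : SimpleGraph V) : ℕ :=
  (∑ u : V, ∑ v : V, G.dist u v) / 2

/-- The eccentricity of a vertex. -/
noncomputable def eccVert {V : Type*} [Fintype V] (G : SimpleGraph V) (v : V) : ℕ :=
  univ.sup (G.dist v)

/-- The eccentricity (total eccentricity) of a graph. -/
noncomputable def eccSum {V : Type*} [Fintype V] (G : SimpleGraph V) : ℕ :=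
  ∑ v : V, eccVert G v

/-- The radius of a graph: the minimum eccentricity. -/
noncomputable def graphRad {V : Type*} [Fintype V] [Nonempty V]
    (G : SimpleGraph V) : ℕ :=
  univ.inf' univ_nonempty (eccVert G)

/-!
Let `p` be the unique central vertex and `r` the radius. The bound `ε(v) ≤ d(p, v) + r` is the
triangle inequality. Conversely, for `v ≠ p` let `q` be the neighbour of `p` towards `v`. As `q`
is not central, some `y` has `d(q, y) > r ≥ d(p, y)`, so the path from `p` to `y` leaves `p`
through another neighbour; the two paths then glue at `p` to the path from `v` to `y`, giving
`ε(v) ≥ d(v, y) = d(p, v) + d(p, y) ≥ d(p, v) + r`. Summing `ε(v) = d(p, v) + r` over `v`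
gives the theorem.
-/

namespace SimpleGraph

variable {V : Type*} {G : SimpleGraph V}

lemma IsAcyclic.length_eq_dist (hG : G.IsAcyclic) {u v : V} {P : G.Walk u v} (hP : P.IsPath) :
    P.length = G.dist u v := by
  obtain ⟨Q, hQ, hlen⟩ := P.reachable.exists_path_of_dist
  rw [← hlen, Subtype.mk.inj <| (hG.subsingleton_path u v).elim ⟨P, hP⟩ ⟨Q, hQ⟩]

lemma IsAcyclic.isPath_reverse_append (hG : G.IsAcyclic) {u v w : V} {P : G.Walk u v}
    {Q : G.Walk u w} (hP : P.IsPath) (hQ : Q.IsPath) (hsnd : P.snd ≠ Q.snd) :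
    (P.reverse.append Q).IsPath := by
  classical
  rw [Walk.isPath_def, Walk.support_append, Walk.support_reverse, List.nodup_append]
  refine ⟨List.nodup_reverse.mpr hP.support_nodup,
    hQ.support_nodup.sublist (List.tail_sublist _), fun z hzP z' hzQ hzz' => ?_⟩
  subst hzz'
  rw [List.mem_reverse] at hzP
  have hzu : z ≠ u := by
    rintro rfl
    have hnodup := hQ.support_nodup
    rw [← Walk.cons_tail_support, List.nodup_cons] at hnodup
    exact hnodup.1 hzQ
  have hzQ' : z ∈ Q.support := List.mem_of_mem_tail hzQ
  have hpaths := Subtype.mk.inj <| (hG.subsingleton_path u z).elim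
    ⟨_, hP.takeUntil hzP⟩ ⟨_, hQ.takeUntil hzQ'⟩
  apply hsnd
  rw [← Walk.snd_takeUntil hzu P hzP, ← Walk.snd_takeUntil hzu Q hzQ', hpaths]

lemma IsAcyclic.dist_eq_dist_add_dist_of_snd_ne (hG : G.IsAcyclic) {u v w : V}
    {P : G.Walk u v} {Q : G.Walk u w} (hP : P.IsPath) (hQ : Q.IsPath) (hsnd : P.snd ≠ Q.snd) :
    G.dist v w = G.dist u v + G.dist u w := by
  rw [← hG.length_eq_dist (hG.isPath_reverse_append hP hQ hsnd), Walk.length_append,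
    Walk.length_reverse, hG.length_eq_dist hP, hG.length_eq_dist hQ]

lemma dist_snd_add_one_le_length {u v : V} {P : G.Walk u v} (hP : ¬P.Nil) :
    G.dist P.snd v + 1 ≤ P.length :=
  Walk.length_tail_add_one hP ▸ Nat.add_le_add_right (dist_le P.tail) 1

section Eccentricity

variable [Fintype V]

lemma dist_le_eccVert (v u : V) : G.dist v u ≤ eccVert G v :=
  le_sup (mem_univ u)

lemma exists_dist_eq_eccVert [Nonempty V] (v : V) : ∃ u, G.dist v u = eccVert G v := by
  obtain ⟨u, -, hu⟩ := exists_mem_eq_sup univ univ_nonempty (G.dist v)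
  exact ⟨u, hu.symm⟩

lemma graphRad_le_eccVert [Nonempty V] (v : V) : graphRad G ≤ eccVert G v :=
  inf'_le _ (mem_univ v)

lemma Connected.eccVert_le_dist_add_eccVert (hG : G.Connected) (u v : V) :
    eccVert G v ≤ G.dist u v + eccVert G u :=
  Finset.sup_le fun w _ => calc
    G.dist v w ≤ G.dist v u + G.dist u w := hG.dist_triangle
    _ ≤ G.dist u v + eccVert G u := by rw [dist_comm]; gcongr; exact dist_le_eccVert u w

lemma IsTree.eccVert_eq_dist_add_graphRad [Nonempty V] (hT : G.IsTree)
    {p : V} (hcenter : ∀ v : V, eccVert G v = graphRad G ↔ v = p) (v : V) :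
    eccVert G v = G.dist p v + graphRad G := by
  have hp : eccVert G p = graphRad G := (hcenter p).mpr rfl
  refine le_antisymm (hp ▸ hT.connected.eccVert_le_dist_add_eccVert p v) ?_
  rcases eq_or_ne v p with rfl | hvp
  · rw [dist_self, zero_add, hp]
  obtain ⟨P, hP, -⟩ := hT.connected.exists_path_of_dist p v
  have hPnil : ¬P.Nil := Walk.not_nil_of_ne hvp.symm
  have hadj : G.Adj p P.snd := P.adj_snd hPnil
  have hq_ecc : graphRad G < eccVert G P.snd :=
    (graphRad_le_eccVert _).lt_of_ne fun h => hadj.ne ((hcenter _).mp h.symm).symm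
  obtain ⟨y, hy⟩ := exists_dist_eq_eccVert (G := G) P.snd
  have hpy : G.dist p y ≤ graphRad G := hp ▸ dist_le_eccVert p y
  obtain ⟨Q, hQ, hQlen⟩ := hT.connected.exists_path_of_dist p y
  have hsnd : P.snd ≠ Q.snd := by
    intro h
    have hQnil : ¬Q.Nil := fun hnil => by cases hnil; exact hadj.ne h.symm
    have := dist_snd_add_one_le_length hQnil
    rw [← h, hQlen] at this
    omega
  have hqy : G.dist P.snd y ≤ 1 + G.dist p y := by
    rw [← dist_eq_one_iff_adj.mpr hadj.symm]; exact hT.connected.dist_triangle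
  calc G.dist p v + graphRad G ≤ G.dist p v + G.dist p y := by omega
    _ = G.dist v y := (hT.isAcyclic.dist_eq_dist_add_dist_of_snd_ne hP hQ hsnd).symm
    _ ≤ eccVert G v := dist_le_eccVert v y

end Eccentricity

end SimpleGraph

theorem stmt_16 {V : Type*} [Fintype V] [Nonempty V] (T : SimpleGraph V)
    (hT : T.IsTree) (p : V)
    (hcenter : ∀ v : V, eccVert T v = graphRad T ↔ v = p) :
    eccSum T = (∑ u : V, T.dist p u) + Fintype.card V * graphRad T := by
  rw [eccSum, sum_congr rfl fun v _ => hT.eccVert_eq_dist_add_graphRad hcenter v,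
    sum_add_distrib, sum_const, card_univ, smul_eq_mul]
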